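/- Let (E,ℒ,𝒜) be a weakly left-resolving, normal labelled space, and let α, β ∈ ℒ^{≥1} and γ ∈ ℒ^{≤∞} be such that αβγ ∈ ℒ^{≤∞}. Then G_{(αβ)γ} = G_{(α)βγ} ∘ G_{(β)γ} and H_{[β]γ} ∘ H_{[α]βγ} = H_{[αβ]γ}. -/

import Mathlib

open Classical

universe u v w

/-! ## Words over an alphabet -/

/-- Finite-or-infinite words over the alphabet `A`: `Sum.inl l` is the finite word `l`
(with `[]` playing the role of the empty word `ω`), and `Sum.inr f` is the infinite word `f`. -/
abbrev Word (A : Type w) := List A ⊕ (ℕ → A)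

/-- The length `|α| ∈ ℕ∞` of a word. -/
def wlength {A : Type w} : Word A → ℕ∞ :=
  Sum.elim (fun l => (l.length : ℕ∞)) fun _ => ⊤

/-- The finite prefix `α_{1,n}` of a word `α`. -/
def wprefix {A : Type w} : Word A → ℕ → List A :=
  Sum.elim (fun l n => l.take n) fun f n => List.ofFn fun i : Fin n => f i

/-- Concatenation `αβ` of a finite word `α` with a word `β`. -/
def wappend {A : Type w} (α : List A) : Word A → Word A :=
  Sum.elim (fun l => Sum.inl (α ++ l)) fun f =>
    Sum.inr fun n => if h : n < α.length then α.get ⟨n, h⟩ else f (n - α.length)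

/-- `β` is a beginning (finite prefix) of the word `α`. -/
def WPrefix {A : Type w} (β : List A) : Word A → Prop :=
  Sum.elim (fun l => β <+: l) fun f => β = List.ofFn fun i : Fin β.length => f i

/-! ## Triples -/

/-- Formal triples `(α, X, β)` together with a zero element; the inverse semigroup `S`
of a labelled space consists of such elements. -/
inductive Tr (V : Type u) (A : Type w) where
  | zero : Tr V A
  | mk : List A → Set V → List A → Tr V A

/-- The involution `(α,A,β)* = (β,A,α)` (fixing `0`). -/
def Tr.tstar {V : Type u} {A : Type w} : Tr V A → Tr V A
  | .zero => .zero
  | .mk α X β => .mk β X α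

/-! ## Labelled spaces -/

/-- The data of a labelled space `(E, ℒ, 𝒜)`: a directed graph on nonempty vertex/edge
sets, a surjective labelling map onto the alphabet `A`, and a family `𝒜` of subsets
of the vertex set. -/
structure LblSp (V : Type u) (E : Type v) (A : Type w) where
  src : E → V
  rng : E → V
  lab : E → A
  lab_surj : Function.Surjective lab
  nonempty_V : Nonempty V
  nonempty_E : Nonempty E
  𝒜 : Set (Set V)

namespace LblSp

variable {V : Type u} {Ed : Type v} {A : Type w} (Λ : LblSp V Ed A)

/-- `α ≠ ω` is the label of some finite path of the graph. -/
def IsPathLabel (α : List A) : Prop :=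
  ∃ l : List Ed, l ≠ [] ∧ List.Chain' (fun e f => Λ.rng e = Λ.src f) l ∧ l.map Λ.lab = α

/-- `ℒ^*`: the finite labelled paths, together with the empty word. -/
def LStar : Set (List A) := {α | α = [] ∨ Λ.IsPathLabel α}

/-- `ℒ^∞`: the infinite labelled paths. -/
def LInfty : Set (ℕ → A) :=
  {f | ∃ e : ℕ → Ed, (∀ n, Λ.rng (e n) = Λ.src (e (n + 1))) ∧ ∀ n, Λ.lab (e n) = f n}

/-- `ℒ^{≤∞} = ℒ^* ∪ ℒ^∞`, as a predicate on `Word A`. -/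
def IsWordW : Word A → Prop := Sum.elim (· ∈ Λ.LStar) (· ∈ Λ.LInfty)

/-- The relative range `r(X, α)` (with `r(X, ω) = X`). -/
noncomputable def relRange (X : Set V) (α : List A) : Set V :=
  if α = [] then X
  else {v | ∃ (l : List Ed) (h : l ≠ []), List.Chain' (fun e f => Λ.rng e = Λ.src f) l ∧
        l.map Λ.lab = α ∧ Λ.src (l.head h) ∈ X ∧ Λ.rng (l.getLast h) = v}

/-- The range `r(α) = r(E⁰, α)`. -/
noncomputable def rangeL (α : List A) : Set V := Λ.relRange Set.univ α

/-- `𝒜^α = {X ∈ 𝒜 : X ⊆ r(α)}`. -/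
noncomputable def Aset (α : List A) : Set (Set V) := {X | X ∈ Λ.𝒜 ∧ X ⊆ Λ.rangeL α}

/-- `(E, ℒ, 𝒜)` is a labelled space: `𝒜` is closed under finite intersections and
unions, contains all ranges `r(α)` for `α ∈ ℒ^{≥1}`, and is closed under relative ranges. -/
structure IsLS : Prop where
  inter_mem : ∀ X ∈ Λ.𝒜, ∀ Y ∈ Λ.𝒜, X ∩ Y ∈ Λ.𝒜
  union_mem : ∀ X ∈ Λ.𝒜, ∀ Y ∈ Λ.𝒜, X ∪ Y ∈ Λ.𝒜
  range_mem : ∀ α ∈ Λ.LStar, α ≠ [] → Λ.rangeL α ∈ Λ.𝒜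
  relRange_mem : ∀ X ∈ Λ.𝒜, ∀ α ∈ Λ.LStar, Λ.relRange X α ∈ Λ.𝒜

/-- A weakly left-resolving labelled space. -/
structure IsWLR : Prop where
  toIsLS : Λ.IsLS
  wlr : ∀ X ∈ Λ.𝒜, ∀ Y ∈ Λ.𝒜, ∀ α ∈ Λ.LStar, α ≠ [] →
    Λ.relRange (X ∩ Y) α = Λ.relRange X α ∩ Λ.relRange Y α

/-- A weakly left-resolving normal labelled space. -/
structure IsNormal : Prop where
  toIsWLR : Λ.IsWLR
  sdiff_mem : ∀ X ∈ Λ.𝒜, ∀ Y ∈ Λ.𝒜, X \ Y ∈ Λ.𝒜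

/-! ## The inverse semigroup `S` -/

/-- The underlying set of the inverse semigroup
`S = {(α,A,β) : α, β ∈ ℒ^*, A ∈ 𝒜^α ∩ 𝒜^β, A ≠ ∅} ∪ {0}`. -/
def SSet : Set (Tr V A) :=
  {t | t = Tr.zero ∨ ∃ α X β, t = Tr.mk α X β ∧ α ∈ Λ.LStar ∧ β ∈ Λ.LStar ∧
    X ∈ Λ.Aset α ∧ X ∈ Λ.Aset β ∧ X.Nonempty}

/-- The semilattice of idempotents `E(S) = {(α,A,α)} ∪ {0}`. -/
def ESet : Set (Tr V A) :=
  {t | t = Tr.zero ∨ ∃ α X, t = Tr.mk α X α ∧ α ∈ Λ.LStar ∧ X ∈ Λ.Aset α ∧ X.Nonempty}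

/-- The product of `S`. -/
noncomputable def tmul : Tr V A → Tr V A → Tr V A
  | Tr.zero, _ => Tr.zero
  | Tr.mk _ _ _, Tr.zero => Tr.zero
  | Tr.mk α X β, Tr.mk γ Y δ =>
    if β <+: γ ∧ (Λ.relRange X (γ.drop β.length) ∩ Y).Nonempty then
      Tr.mk (α ++ γ.drop β.length) (Λ.relRange X (γ.drop β.length) ∩ Y) δ
    else if γ <+: β ∧ (X ∩ Λ.relRange Y (β.drop γ.length)).Nonempty then
      Tr.mk α (X ∩ Λ.relRange Y (β.drop γ.length)) (δ ++ β.drop γ.length)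
    else Tr.zero

/-! ## Filters in `E(S)`, characters, and the tight spectrum -/

/-- A filter in `E(S)`: a nonempty subset of `E(S) ∖ {0}` closed under products and
upward closed in the natural order (`p ≤ q ↔ pq = p`). -/
def IsFilterES (ξ : Set (Tr V A)) : Prop :=
  ξ.Nonempty ∧ (∀ t ∈ ξ, t ∈ Λ.ESet ∧ t ≠ Tr.zero) ∧
  (∀ p ∈ ξ, ∀ q ∈ ξ, Λ.tmul p q ∈ ξ) ∧
  (∀ p ∈ ξ, ∀ q ∈ Λ.ESet, Λ.tmul p q = p → q ∈ ξ)

/-- An ultrafilter in `E(S)`. -/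
def IsUltraES (ξ : Set (Tr V A)) : Prop :=
  Λ.IsFilterES ξ ∧ ∀ ζ, Λ.IsFilterES ζ → ξ ⊆ ζ → ξ = ζ

/-- The character (indicator function) of a filter. -/
noncomputable def charOf (_Λ : LblSp V Ed A) (ξ : Set (Tr V A)) : Tr V A → Bool :=
  fun t => if t ∈ ξ then true else false

/-- A character of `E(S)`: a nonzero, zero- and meet-preserving `{0,1}`-valued map on
`E(S)` (encoded as a map on triples vanishing outside `E(S)`). -/
def IsChar (φ : Tr V A → Bool) : Prop :=
  (∃ e, φ e = true) ∧ (∀ e, e ∉ Λ.ESet → φ e = false) ∧ φ Tr.zero = false ∧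
  ∀ e ∈ Λ.ESet, ∀ f ∈ Λ.ESet, φ (Λ.tmul e f) = (φ e && φ f)

/-- The tight spectrum `Ê_tight`: the closure, within the space of characters with the
topology of pointwise convergence, of the set of characters of ultrafilters. -/
def tightSpectrum : Set (Tr V A → Bool) :=
  {φ | Λ.IsChar φ} ∩ closure {φ | ∃ ξ, Λ.IsUltraES ξ ∧ φ = Λ.charOf ξ}

/-- A tight filter: a filter whose character lies in the tight spectrum. -/
def IsTightFilter (ξ : Set (Tr V A)) : Prop :=
  Λ.IsFilterES ξ ∧ Λ.charOf ξ ∈ Λ.tightSpectrum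

/-- `ξ_{|β|} = {B : (β, B, β) ∈ ξ}`, the filter of `ξ` at level `β`. -/
def filterAt (_Λ : LblSp V Ed A) (ξ : Set (Tr V A)) (β : List A) : Set (Set V) :=
  {B | Tr.mk β B β ∈ ξ}

/-- `α` is the word associated with the filter `ξ` (i.e. `ξ = ξ^α`): the nonempty finite
beginnings of `α` are exactly the words appearing in elements of `ξ`. -/
def HasWord (_Λ : LblSp V Ed A) (ξ : Set (Tr V A)) (α : Word A) : Prop :=
  ∀ β : List A, β ≠ [] → ((∃ B, Tr.mk β B β ∈ ξ) ↔ WPrefix β α)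

/-! ## Filters and ultrafilters in `𝒜^β` -/

/-- A filter in the Boolean algebra `𝒜^β`. -/
def IsFilterAset (β : List A) (F : Set (Set V)) : Prop :=
  F.Nonempty ∧ F ⊆ Λ.Aset β ∧ (∀ X ∈ F, X.Nonempty) ∧
  (∀ X ∈ F, ∀ Y ∈ F, X ∩ Y ∈ F) ∧ (∀ X ∈ F, ∀ Y ∈ Λ.Aset β, X ⊆ Y → Y ∈ F)

/-- An ultrafilter in `𝒜^β` (an element of `X_β`). -/
def IsUltraAset (β : List A) (F : Set (Set V)) : Prop :=
  Λ.IsFilterAset β F ∧ ∀ G, Λ.IsFilterAset β G → F ⊆ G → F = G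

/-- The gluing map `g_{(α)β}(F) = {C ∩ r(αβ) : C ∈ F}` on ultrafilters. -/
noncomputable def gmap (α β : List A) (F : Set (Set V)) : Set (Set V) :=
  {X | ∃ C ∈ F, X = C ∩ Λ.rangeL (α ++ β)}

/-- The cutting map `h_{[α]β}(F) = {C ∈ 𝒜^β : D ⊆ C for some D ∈ F}` on ultrafilters. -/
noncomputable def hmap (α β : List A) (F : Set (Set V)) : Set (Set V) :=
  {C | C ∈ Λ.Aset β ∧ ∃ D ∈ F, D ⊆ C}

/-! ## Cutting and gluing of (tight) filters in `E(S)` -/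

/-- The cutting map `H_{[α]β} : T^{αβ} → T^{(α)β}` (word-free formulation): the filter
whose family is `η_n = h_{[α]β_{1,n}}(ξ_{n+|α|})`; `H_{[ω]β}` is the identity. -/
noncomputable def Hcut (α : List A) (ξ : Set (Tr V A)) : Set (Tr V A) :=
  if α = [] then ξ
  else {t | ∃ δ B, t = Tr.mk δ B δ ∧ B ∈ Λ.Aset δ ∧
        ∃ D, Tr.mk (α ++ δ) D (α ++ δ) ∈ ξ ∧ D ⊆ B}

/-- The gluing map `G_{(α)β} : T^{(α)β} → T^{αβ}` (word-free formulation): the filter with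
family `η_{|α|+n} = g_{(α)β_{1,n}}(ξ_n)` for `n ≥ 1` and `η_i = f_{α_{1,i}[…]}(…)` for
`i ≤ |α|`, with the two cases according to whether the word of `ξ` is empty (`β = ω`)
or not; `G_{(ω)β}` is the identity. -/
noncomputable def Gglue (α : List A) (ξ : Set (Tr V A)) : Set (Tr V A) :=
  if α = [] then ξ
  else if ∃ (δ : List A) (B : Set V), δ ≠ [] ∧ Tr.mk δ B δ ∈ ξ then
    {t | ∃ δ B, t = Tr.mk δ B δ ∧
      ((α <+: δ ∧ α ≠ δ ∧ ∃ C, Tr.mk (δ.drop α.length) C (δ.drop α.length) ∈ ξ ∧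
          B = C ∩ Λ.rangeL δ) ∨
       (δ <+: α ∧ B ∈ Λ.Aset δ ∧ ∃ (b : A) (C : Set V), Tr.mk [b] C [b] ∈ ξ ∧
          Λ.relRange B (α.drop δ.length ++ [b]) = C ∩ Λ.rangeL (α ++ [b])))}
  else
    {t | ∃ δ B, t = Tr.mk δ B δ ∧ δ <+: α ∧ B ∈ Λ.Aset δ ∧
      ∃ C, Tr.mk [] C [] ∈ ξ ∧ Λ.relRange B (α.drop δ.length) = C ∩ Λ.rangeL α}

/-- `T^β`: the set of tight filters with associated word `β`. -/
def TWord (β : Word A) : Set (Set (Tr V A)) :=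
  {ξ | Λ.IsTightFilter ξ ∧ Λ.HasWord ξ β}

/-- `T^{(α)β} = {ξ ∈ T^β : r(α) ∈ ξ_0}` (equal to `T^β` when `α = ω`), the domain of the
gluing map `G_{(α)β}`. -/
def TGlueDom (α : List A) (β : Word A) : Set (Set (Tr V A)) :=
  {ξ | Λ.IsTightFilter ξ ∧ Λ.HasWord ξ β ∧ (α ≠ [] → Tr.mk [] (Λ.rangeL α) [] ∈ ξ)}

/-! ## The groupoid `Γ` -/

/-- The defining relation of
`Γ = {(ξ^{aγ}, |a|-|b|, η^{bγ}) ∈ T × ℤ × T : H_{[a]γ}(ξ^{aγ}) = H_{[b]γ}(η^{bγ})}`. -/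
def InGamma (η : Set (Tr V A)) (m : ℤ) (ξ : Set (Tr V A)) : Prop :=
  ∃ (a b : List A) (γ : Word A), a ∈ Λ.LStar ∧ b ∈ Λ.LStar ∧ Λ.IsWordW γ ∧
    η ∈ Λ.TWord (wappend a γ) ∧ ξ ∈ Λ.TWord (wappend b γ) ∧
    m = (a.length : ℤ) - (b.length : ℤ) ∧ Λ.Hcut a η = Λ.Hcut b ξ

/-- `Γ` as a set of raw triples. -/
def GammaRaw : Set (Set (Tr V A) × ℤ × Set (Tr V A)) :=
  {p | Λ.InGamma p.1 p.2.1 p.2.2}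

/-- The basic set `Z_{s,e:e₁,…,eₙ}` of `Γ` (raw version), for `s = (μ, X, ν)`:
triples `(η^{μγ}, |μ|-|ν|, ξ^{νγ}) ∈ Γ` with `e ∈ ξ`, `eᵢ ∉ ξ` and
`H_{[μ]γ}(η) = H_{[ν]γ}(ξ)`. -/
noncomputable def ZrawGen (μ ν : List A) (e : Tr V A) (es : List (Tr V A)) :
    Set (Set (Tr V A) × ℤ × Set (Tr V A)) :=
  {p | Λ.InGamma p.1 p.2.1 p.2.2 ∧ p.2.1 = (μ.length : ℤ) - (ν.length : ℤ) ∧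
       e ∈ p.2.2 ∧ (∀ f ∈ es, f ∉ p.2.2) ∧
       ∃ γ : Word A, Λ.HasWord p.1 (wappend μ γ) ∧ Λ.HasWord p.2.2 (wappend ν γ) ∧
         Λ.Hcut μ p.1 = Λ.Hcut ν p.2.2}

/-- `Z_s = Z_{s, s*s}` for `s = (μ, X, ν)` (raw version). -/
noncomputable def Zraw (μ : List A) (X : Set V) (ν : List A) :
    Set (Set (Tr V A) × ℤ × Set (Tr V A)) :=
  Λ.ZrawGen μ ν (Tr.mk ν X ν) []

/-- The basic set `V_{e:e₁,…,eₙ} = U_{e:e₁,…,eₙ} ∩ T` of the tight filter space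
(raw version). -/
def VrawGen (e : Tr V A) (es : List (Tr V A)) : Set (Set (Tr V A)) :=
  {ξ | Λ.IsTightFilter ξ ∧ e ∈ ξ ∧ ∀ f ∈ es, f ∉ ξ}

/-- The shift map `σ : T^{(1)} → T`, `σ(ξ^{aγ}) = H_{[a]γ}(ξ^{aγ})` (extended by the
identity off its domain). -/
noncomputable def sigmaMap (ξ : Set (Tr V A)) : Set (Tr V A) :=
  if h : ∃ a : A, ∃ B : Set V, Tr.mk [a] B [a] ∈ ξ then Λ.Hcut [h.choose] ξ else ξ

/-- The Renault–Deaconu basic set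
`𝒱(X, Y, m, n) = {(η, m-n, ξ) ∈ Γ : (η, ξ) ∈ X × Y, σ^m(η) = σ^n(ξ)}` (raw version). -/
noncomputable def VrdRaw (Xs Ys : Set (Set (Tr V A))) (m n : ℕ) :
    Set (Set (Tr V A) × ℤ × Set (Tr V A)) :=
  {p | Λ.InGamma p.1 p.2.1 p.2.2 ∧ p.2.1 = (m : ℤ) - (n : ℤ) ∧
       p.1 ∈ Xs ∧ p.2.2 ∈ Ys ∧ (Λ.sigmaMap)^[m] p.1 = (Λ.sigmaMap)^[n] p.2.2}

/-! ## The groupoid of germs `𝒢_tight` -/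

/-- The action `θ_s(φ)(e) = φ(s* e s)` of `S` on characters. -/
noncomputable def theta (s : Tr V A) (φ : Tr V A → Bool) : Tr V A → Bool :=
  fun e => if e ∈ Λ.ESet then φ (Λ.tmul (Λ.tmul (Tr.tstar s) e) s) else false

/-- `Ω = {(s, φ) ∈ S × Ê_tight : φ ∈ D_{s*s}}`. -/
noncomputable def Omega : Set (Tr V A × (Tr V A → Bool)) :=
  {p | p.1 ∈ Λ.SSet ∧ p.2 ∈ Λ.tightSpectrum ∧ p.2 (Λ.tmul (Tr.tstar p.1) p.1) = true}

/-- The germ equivalence relation on `Ω`: `(s,φ) ∼ (t,ψ)` iff `φ = ψ` and there is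
`e ∈ E(S)` with `φ(e) = 1` and `se = te`. -/
noncomputable def germEquiv (p q : Tr V A × (Tr V A → Bool)) : Prop :=
  p.2 = q.2 ∧ ∃ e ∈ Λ.ESet, p.2 e = true ∧ Λ.tmul p.1 e = Λ.tmul q.1 e

/-- The map `Φ` at the level of `Ω`: for `t = (β, X, γ)` and `φ` with filter `ξ^α`
(where `α = γα'`), `Φ[t,φ] = ((G_{(β)α'} ∘ H_{[γ]α'})(ξ^α), |β|-|γ|, ξ^α)`. -/
noncomputable def PhiRaw : Tr V A → (Tr V A → Bool) → Set (Tr V A) × ℤ × Set (Tr V A)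
  | Tr.zero, _ => (∅, 0, ∅)
  | Tr.mk β _ γ, φ =>
      (Λ.Gglue β (Λ.Hcut γ {e | φ e = true}), (β.length : ℤ) - (γ.length : ℤ),
        {e | φ e = true})

/-! ## Miscellaneous notions -/

/-- `ℒ(XE¹) = {ℒ(e) : e ∈ E¹, s(e) ∈ X}`. -/
def labE (X : Set V) : Set A := {a | ∃ e, Λ.lab e = a ∧ Λ.src e ∈ X}

/-- The set `E⁰_sink` of sinks. -/
def sinks : Set V := {v | ∀ e, Λ.src e ≠ v}

/-- The filter in `E(S)` associated with a pair (word, complete family). -/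
def pairFilter (_Λ : LblSp V Ed A) (α : Word A) (F : ℕ → Set (Set V)) : Set (Tr V A) :=
  {t | ∃ (n : ℕ) (B : Set V), (n : ℕ∞) ≤ wlength α ∧ B ∈ F n ∧
    t = Tr.mk (wprefix α n) B (wprefix α n)}

/-- A complete family for the word `α`: `F n` is a filter in `𝒜^{α_{1,n}}` for
`1 ≤ n ≤ |α|` (`F 0` is a filter in `𝒜` or empty, and a filter if `α = ω`), and
`F n = {X ∈ 𝒜^{α_{1,n}} : r(X, α_{n+1}) ∈ F (n+1)}` for all `n < |α|`. -/
noncomputable def IsCompleteFamily (α : Word A) (F : ℕ → Set (Set V)) : Prop :=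
  Λ.IsWordW α ∧
  (∀ n : ℕ, 1 ≤ n → (n : ℕ∞) ≤ wlength α → Λ.IsFilterAset (wprefix α n) (F n)) ∧
  (F 0 = ∅ ∨ Λ.IsFilterAset [] (F 0)) ∧
  (wlength α = 0 → Λ.IsFilterAset [] (F 0)) ∧
  (∀ n : ℕ, ((n + 1 : ℕ) : ℕ∞) ≤ wlength α →
    F n = {X | X ∈ Λ.Aset (wprefix α n) ∧
      Λ.relRange X ((wprefix α (n + 1)).drop n) ∈ F (n + 1)})

/-! ## The tight filter space `T` and the groupoid `Γ` as types -/

/-- The space `T` of tight filters. -/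
structure TightT where
  carrier : Set (Tr V A)
  tight : Λ.IsTightFilter carrier

/-- The topology of `T`, induced from pointwise convergence of characters. -/
noncomputable instance : TopologicalSpace Λ.TightT :=
  TopologicalSpace.induced (fun ξ => Λ.charOf ξ.carrier) inferInstance

/-- The groupoid `Γ ⊆ T × ℤ × T` as a type. -/
structure GammaT where
  fst : Λ.TightT
  mid : ℤ
  lst : Λ.TightT
  mem : Λ.InGamma fst.carrier mid lst.carrier

/-- The raw triple underlying an element of `Γ`. -/
def rawOf (p : Λ.GammaT) : Set (Tr V A) × ℤ × Set (Tr V A) :=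
  (p.fst.carrier, p.mid, p.lst.carrier)

/-- The collection of all sets `Z_{s,e:e₁,…,eₙ}` (for `s ∈ S`, `e, eᵢ ∈ E(S)`),
as subsets of `Γ`. -/
noncomputable def ZBasisT : Set (Set Λ.GammaT) :=
  {Z | ∃ (μ : List A) (X : Set V) (ν : List A) (e : Tr V A) (es : List (Tr V A)),
    Tr.mk μ X ν ∈ Λ.SSet ∧ e ∈ Λ.ESet ∧ (∀ f ∈ es, f ∈ Λ.ESet) ∧
    Z = {p : Λ.GammaT | Λ.rawOf p ∈ Λ.ZrawGen μ ν e es}}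

/-- The topology on `Γ` induced by the isomorphism `Φ` from the germ topology of
`𝒢_tight`, generated by the images of the basic sets `Θ(s, 𝒰)` with `𝒰 ⊆ D_{s*s}`
open in the tight spectrum. -/
noncomputable def PhiTopology : TopologicalSpace Λ.GammaT :=
  TopologicalSpace.generateFrom
    {Z | ∃ (s : Tr V A) (U : Set (Tr V A → Bool)), s ∈ Λ.SSet ∧
      (∃ W, IsOpen W ∧ U = W ∩ Λ.tightSpectrum) ∧
      (∀ φ ∈ U, φ (Λ.tmul (Tr.tstar s) s) = true) ∧
      Z = {p : Λ.GammaT | ∃ φ ∈ U, (s, φ) ∈ Λ.Omega ∧ Λ.PhiRaw s φ = Λ.rawOf p}}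

end LblSp

/-! Above level `|α|`, `G_{(α)}ξ` is `ξ` shifted by `α` and cut down to `r(αε)` at level `αε`;
at a level `δ ≤ α` it consists of the `B` with `r(B, α_{|δ|+1,|α|}κ) = C ∩ r(ακ)` for some
`C ∈ ξ_{|κ|}`, where `κ` is the first letter of the word of `ξ` (or `ω` if that word is `ω`).
Gluing `α` onto `η = G_{(β)}ξ`, the levels of `η` above `β` give the levels of `G_{(αβ)}ξ` above
`αβ`, the levels `ε ≤ β` of `η` give those strictly between `α` and `αβ`, and the levels `δ ≤ α`
consult level `β₁` of `η`, which consults `ξ_{|κ|}` in turn. The two descriptions agree because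
of weak left-resolvingness, `r(X ∩ r(μ), ν) = r(X, ν) ∩ r(μν)`, and because `C ∈ ξ_{|κ|}`
implies `C ∩ r(αβκ) ∈ ξ_{|κ|}` (as `r(αβ) ∈ ξ_0`). The identity for `H` is associativity of
concatenation, together with `r(αβδ) ⊆ r(βδ)`. -/

namespace LblSp

variable {V : Type u} {Ed : Type v} {A : Type w} (Λ : LblSp V Ed A)

theorem relRange_nil (X : Set V) : Λ.relRange X [] = X := if_pos rfl

theorem relRange_of_ne_nil {μ : List A} (hμ : μ ≠ []) (X : Set V) :
    Λ.relRange X μ = {v | ∃ (l : List Ed) (h : l ≠ []),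
      List.IsChain (fun e f => Λ.rng e = Λ.src f) l ∧
      l.map Λ.lab = μ ∧ Λ.src (l.head h) ∈ X ∧ Λ.rng (l.getLast h) = v} := if_neg hμ

theorem relRange_mono {X Y : Set V} (h : X ⊆ Y) (μ : List A) :
    Λ.relRange X μ ⊆ Λ.relRange Y μ := by
  rcases eq_or_ne μ [] with rfl | hμ
  · simpa only [relRange_nil] using h
  · rw [relRange_of_ne_nil Λ hμ, relRange_of_ne_nil Λ hμ]
    rintro v ⟨l, hl, c, m, hx, rfl⟩
    exact ⟨l, hl, c, m, h hx, rfl⟩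

theorem relRange_append (X : Set V) (μ ν : List A) :
    Λ.relRange (Λ.relRange X μ) ν = Λ.relRange X (μ ++ ν) := by
  rcases eq_or_ne μ [] with rfl | hμ
  · rw [relRange_nil, List.nil_append]
  rcases eq_or_ne ν [] with rfl | hν
  · rw [relRange_nil, List.append_nil]
  ext v
  rw [relRange_of_ne_nil Λ hν, relRange_of_ne_nil Λ (List.append_ne_nil_of_left_ne_nil hμ ν)]
  constructor
  · rintro ⟨l₂, h₂, c₂, rfl, hsrc, rfl⟩
    rw [relRange_of_ne_nil Λ hμ] at hsrc
    obtain ⟨l₁, h₁, c₁, rfl, hx, hlast⟩ := hsrc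
    refine ⟨l₁ ++ l₂, List.append_ne_nil_of_left_ne_nil h₁ _, c₁.append c₂ ?_,
      List.map_append .., by rwa [List.head_append_of_ne_nil h₁],
      by rw [List.getLast_append_of_ne_nil _ h₂]⟩
    simp [List.getLast?_eq_some_getLast h₁, List.head?_eq_some_head h₂, hlast]
  · rintro ⟨l, h, c, m, hx, rfl⟩
    obtain ⟨l₁, l₂, rfl, rfl, rfl⟩ := List.map_eq_append_iff.mp m
    have h₁ : l₁ ≠ [] := by rintro rfl; exact hμ rfl
    have h₂ : l₂ ≠ [] := by rintro rfl; exact hν rfl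
    refine ⟨l₂, h₂, c.right_of_append, rfl, ?_, by rw [List.getLast_append_of_ne_nil _ h₂]⟩
    rw [relRange_of_ne_nil Λ hμ]
    exact ⟨l₁, h₁, c.left_of_append, rfl, by rwa [List.head_append_of_ne_nil h₁] at hx,
      c.rel_getLast_head_of_append h₁ h₂⟩

theorem rangeL_append (μ ν : List A) :
    Λ.rangeL (μ ++ ν) = Λ.relRange (Λ.rangeL μ) ν := (Λ.relRange_append _ _ _).symm

theorem relRange_subset_rangeL (X : Set V) (μ : List A) : Λ.relRange X μ ⊆ Λ.rangeL μ :=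
  Λ.relRange_mono (Set.subset_univ X) μ

theorem rangeL_append_subset (μ ν : List A) : Λ.rangeL (μ ++ ν) ⊆ Λ.rangeL ν := by
  rw [rangeL_append]; exact Λ.relRange_subset_rangeL _ _

theorem relRange_subset_rangeL_append {X : Set V} {ρ : List A} (h : X ⊆ Λ.rangeL ρ)
    (σ : List A) : Λ.relRange X σ ⊆ Λ.rangeL (ρ ++ σ) := by
  rw [rangeL_append]; exact Λ.relRange_mono h σ

theorem inter_rangeL_inter_rangeL_append (C : Set V) (α μ : List A) :
    C ∩ Λ.rangeL μ ∩ Λ.rangeL (α ++ μ) = C ∩ Λ.rangeL (α ++ μ) := by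
  rw [Set.inter_assoc, Set.inter_eq_right.mpr (Λ.rangeL_append_subset α μ)]

theorem inter_rangeL_append_inter_rangeL (C : Set V) (α μ : List A) :
    C ∩ Λ.rangeL (α ++ μ) ∩ Λ.rangeL μ = C ∩ Λ.rangeL (α ++ μ) :=
  Set.inter_eq_left.mpr (Set.inter_subset_right.trans (Λ.rangeL_append_subset α μ))

theorem nonempty_of_nonempty_relRange {X : Set V} {μ : List A} (h : (Λ.relRange X μ).Nonempty) :
    X.Nonempty := by
  rcases eq_or_ne μ [] with rfl | hμ
  · rwa [relRange_nil] at h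
  · rw [relRange_of_ne_nil Λ hμ] at h
    obtain ⟨v, l, hl, c, m, hx, rfl⟩ := h
    exact ⟨_, hx⟩

theorem relRange_eq_empty_of_notMem {μ : List A} (h : μ ∉ Λ.LStar) (X : Set V) :
    Λ.relRange X μ = ∅ := by
  have hμ : μ ≠ [] := by rintro rfl; exact h (Or.inl rfl)
  rw [relRange_of_ne_nil Λ hμ, Set.eq_empty_iff_forall_notMem]
  rintro v ⟨l, hl, c, m, -⟩
  exact h (Or.inr ⟨l, hl, c, m⟩)

theorem mem_LStar_of_prefix {μ ν : List A} (hμ : μ ∈ Λ.LStar) (hνμ : ν <+: μ) :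
    ν ∈ Λ.LStar := by
  rcases eq_or_ne ν [] with rfl | hν
  · exact Or.inl rfl
  rcases hμ with rfl | ⟨l, -, c, m⟩
  · exact absurd (List.prefix_nil.mp hνμ) hν
  obtain ⟨ρ, rfl⟩ := hνμ
  obtain ⟨l₁, l₂, rfl, rfl, -⟩ := List.map_eq_append_iff.mp m
  exact Or.inr ⟨l₁, by rintro rfl; exact hν rfl, c.left_of_append, rfl⟩

section

variable {Λ}

theorem IsNormal.empty_mem (hN : Λ.IsNormal) {X : Set V} (hX : X ∈ Λ.𝒜) : ∅ ∈ Λ.𝒜 := by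
  simpa using hN.sdiff_mem X hX X hX

theorem IsLS.rangeL_mem_of_empty_mem (hL : Λ.IsLS) (hE : ∅ ∈ Λ.𝒜) {μ : List A} (hμ : μ ≠ []) :
    Λ.rangeL μ ∈ Λ.𝒜 := by
  by_cases h : μ ∈ Λ.LStar
  · exact hL.range_mem μ h hμ
  · rwa [rangeL, Λ.relRange_eq_empty_of_notMem h]

theorem IsLS.relRange_mem_of_empty_mem (hL : Λ.IsLS) (hE : ∅ ∈ Λ.𝒜) {X : Set V} (hX : X ∈ Λ.𝒜)
    (μ : List A) : Λ.relRange X μ ∈ Λ.𝒜 := by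
  by_cases h : μ ∈ Λ.LStar
  · exact hL.relRange_mem X hX μ h
  · rwa [Λ.relRange_eq_empty_of_notMem h]

theorem IsWLR.relRange_inter (hW : Λ.IsWLR) {X Y : Set V} (hX : X ∈ Λ.𝒜) (hY : Y ∈ Λ.𝒜)
    (μ : List A) : Λ.relRange (X ∩ Y) μ = Λ.relRange X μ ∩ Λ.relRange Y μ := by
  rcases eq_or_ne μ [] with rfl | hμ
  · simp only [relRange_nil]
  by_cases h : μ ∈ Λ.LStar
  · exact hW.wlr X hX Y hY μ h hμ
  · simp only [Λ.relRange_eq_empty_of_notMem h, Set.inter_self]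

theorem IsFilterES.mem_Aset {ξ : Set (Tr V A)} (hξ : Λ.IsFilterES ξ) {δ : List A}
    {B : Set V} (h : Tr.mk δ B δ ∈ ξ) : δ ∈ Λ.LStar ∧ B ∈ Λ.Aset δ ∧ B.Nonempty := by
  obtain ⟨h0 | ⟨δ', B', heq, hδ', hB', hBne⟩, hne⟩ := hξ.2.1 _ h
  · exact absurd h0 hne
  · obtain ⟨rfl, rfl, -⟩ := Tr.mk.inj heq
    exact ⟨hδ', hB', hBne⟩

theorem IsFilterES.mk_relRange_inter_mem {ξ : Set (Tr V A)} (hξ : Λ.IsFilterES ξ)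
    {R C : Set V} {κ : List A} (hR : Tr.mk [] R [] ∈ ξ) (hC : Tr.mk κ C κ ∈ ξ) :
    Tr.mk κ (C ∩ Λ.relRange R κ) κ ∈ ξ := by
  rw [Set.inter_comm]
  have hm := hξ.2.2.1 _ hR _ hC
  simp only [tmul, List.nil_prefix, List.length_nil, List.drop_zero, true_and,
    List.nil_append] at hm
  split_ifs at hm with h₁ h₂
  · exact hm
  · obtain rfl := List.prefix_nil.mp h₂.1
    simp only [relRange_nil, List.drop_nil] at h₁ h₂
    exact absurd h₂.2 h₁
  · exact absurd rfl (hξ.2.1 _ hm).2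

theorem IsFilterES.mk_rangeL_mem_of_prefix (hL : Λ.IsLS) {ξ : Set (Tr V A)}
    (hξ : Λ.IsFilterES ξ) {δ ρ : List A} {B : Set V} (h : Tr.mk (δ ++ ρ) B (δ ++ ρ) ∈ ξ)
    (hδ : δ ≠ []) : Tr.mk δ (Λ.rangeL δ) δ ∈ ξ := by
  obtain ⟨hδρ, ⟨-, hBsub⟩, hBne⟩ := hξ.mem_Aset h
  have hB : B ⊆ Λ.relRange (Λ.rangeL δ) ρ := Λ.rangeL_append δ ρ ▸ hBsub
  have hδL := Λ.mem_LStar_of_prefix hδρ (List.prefix_append δ ρ)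
  refine hξ.2.2.2 _ h _ (Or.inr ⟨δ, _, rfl, hδL, ⟨hL.range_mem δ hδL hδ, subset_rfl⟩,
    Λ.nonempty_of_nonempty_relRange (hBne.mono hB)⟩) ?_
  rcases eq_or_ne ρ [] with rfl | hρ
  · simp only [List.append_nil, relRange_nil] at hB ⊢
    simp [tmul, relRange_nil, Set.inter_eq_left.mpr hB, hBne]
  · have hlen : ¬ δ ++ ρ <+: δ := fun hp => hρ (by simpa using hp.length_le)
    simp [tmul, hlen, Set.inter_eq_left.mpr hB, hBne]

end

/- The two clauses of `Gglue α ξ` for `α ≠ ω`: the levels above `|α|`, and the levels `δ ≤ α`,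
which read `ξ` at a level `κ` of length `glueLookahead ξ` (`0` exactly when the word of `ξ`
is `ω`). -/
def GlueUpper (α : List A) (ξ : Set (Tr V A)) (δ : List A) (B : Set V) : Prop :=
  ∃ ε, ε ≠ [] ∧ δ = α ++ ε ∧ ∃ C, Tr.mk ε C ε ∈ ξ ∧ B = C ∩ Λ.rangeL δ

def GlueLower (α : List A) (ξ : Set (Tr V A)) (n : ℕ) (δ : List A) (B : Set V) : Prop :=
  ∃ τ, α = δ ++ τ ∧ B ∈ Λ.Aset δ ∧ ∃ κ C, κ.length = n ∧ Tr.mk κ C κ ∈ ξ ∧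
    Λ.relRange B (τ ++ κ) = C ∩ Λ.rangeL (α ++ κ)

noncomputable def glueLookahead (ξ : Set (Tr V A)) : ℕ :=
  if ∃ (δ : List A) (B : Set V), δ ≠ [] ∧ Tr.mk δ B δ ∈ ξ then 1 else 0

theorem mem_Gglue {α : List A} (hα : α ≠ []) (ξ : Set (Tr V A)) (t : Tr V A) :
    t ∈ Λ.Gglue α ξ ↔ ∃ δ B, t = Tr.mk δ B δ ∧
      (Λ.GlueUpper α ξ δ B ∨ Λ.GlueLower α ξ (glueLookahead ξ) δ B) := by
  have upper_iff : ∀ δ B, (α <+: δ ∧ α ≠ δ ∧ ∃ C, Tr.mk (δ.drop α.length) C (δ.drop α.length) ∈ ξ ∧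
      B = C ∩ Λ.rangeL δ) ↔ Λ.GlueUpper α ξ δ B := by
    intro δ B
    constructor
    · rintro ⟨⟨ε, rfl⟩, hne, h⟩
      exact ⟨ε, by rintro rfl; simp at hne, rfl, by simpa using h⟩
    · rintro ⟨ε, hε, rfl, h⟩
      exact ⟨List.prefix_append α ε, by simpa using hε.symm, by simpa using h⟩
  unfold Gglue glueLookahead
  rw [if_neg hα]
  split_ifs with hP
  · refine exists_congr fun δ => exists_congr fun B => and_congr_right fun _ => ?_
    refine or_congr (upper_iff δ B) ⟨?_, ?_⟩
    · rintro ⟨⟨τ, rfl⟩, hB, b, C, hC, h⟩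
      exact ⟨τ, rfl, hB, [b], C, rfl, hC, by simpa using h⟩
    · rintro ⟨τ, rfl, hB, κ, C, hκ, hC, h⟩
      obtain ⟨b, rfl⟩ := List.length_eq_one_iff.mp hκ
      exact ⟨List.prefix_append δ τ, hB, b, C, hC, by simpa using h⟩
  · refine exists_congr fun δ => exists_congr fun B => and_congr_right fun _ => ⟨?_, ?_⟩
    · rintro ⟨⟨τ, rfl⟩, hB, C, hC, h⟩
      exact Or.inr ⟨τ, rfl, hB, [], C, rfl, hC, by simpa using h⟩
    · rintro (⟨ε, hε, -, C, hC, -⟩ | ⟨τ, rfl, hB, κ, C, hκ, hC, h⟩)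
      · exact absurd ⟨ε, C, hε, hC⟩ hP
      · obtain rfl := List.length_eq_zero_iff.mp hκ
        exact ⟨List.prefix_append δ τ, hB, C, hC, by simpa using h⟩

theorem mk_mem_Gglue {α : List A} (hα : α ≠ []) (ξ : Set (Tr V A)) (δ : List A)
    (B : Set V) : Tr.mk δ B δ ∈ Λ.Gglue α ξ ↔
      Λ.GlueUpper α ξ δ B ∨ Λ.GlueLower α ξ (glueLookahead ξ) δ B := by
  simp [Λ.mem_Gglue hα]

section

variable {Λ}

theorem glueLookahead_Gglue (hN : Λ.IsNormal) {β : List A} (hβ : β ≠ []) {ξ : Set (Tr V A)}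
    (hξ : Λ.IsFilterES ξ) {R : Set V} (hR : Tr.mk [] R [] ∈ ξ) :
    glueLookahead (Λ.Gglue β ξ) = 1 := by
  have hL := hN.toIsWLR.toIsLS
  have hβ𝒜 := hL.rangeL_mem_of_empty_mem (hN.empty_mem (hξ.mem_Aset hR).2.1.1) hβ
  rw [glueLookahead, if_pos]
  by_cases hP : ∃ (δ : List A) (B : Set V), δ ≠ [] ∧ Tr.mk δ B δ ∈ ξ
  · have hn : glueLookahead ξ = 1 := if_pos hP
    obtain ⟨_, _, hδ, h⟩ := hP
    obtain ⟨b, δ, rfl⟩ := List.exists_cons_of_ne_nil hδ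
    have hb := hξ.mk_rangeL_mem_of_prefix hL (δ := [b]) (ρ := δ) h (List.cons_ne_nil b [])
    refine ⟨β, _, hβ, (Λ.mk_mem_Gglue hβ ξ β _).mpr (Or.inr ⟨[], by simp,
      ⟨hβ𝒜, subset_rfl⟩, [b], _, hn.symm, hb, ?_⟩)⟩
    rw [List.nil_append, ← rangeL_append,
      Set.inter_eq_right.mpr (Λ.rangeL_append_subset β [b])]
  · have hn : glueLookahead ξ = 0 := if_neg hP
    refine ⟨β, R ∩ Λ.rangeL β, hβ, (Λ.mk_mem_Gglue hβ ξ β _).mpr (Or.inr ⟨[], by simp,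
      ⟨hL.inter_mem _ (hξ.mem_Aset hR).2.1.1 _ hβ𝒜, Set.inter_subset_right⟩, [], R,
      hn.symm, hR, ?_⟩)⟩
    simp only [List.append_nil, relRange_nil]

theorem exists_glueUpper_inter_iff {α β ε : List A} {ξ : Set (Tr V A)} {B : Set V} :
    (∃ C, Λ.GlueUpper β ξ ε C ∧ B = C ∩ Λ.rangeL (α ++ ε)) ↔
      Λ.GlueUpper (α ++ β) ξ (α ++ ε) B := by
  constructor
  · rintro ⟨_, ⟨ρ, hρ, rfl, C, hC, rfl⟩, rfl⟩
    refine ⟨ρ, hρ, by rw [List.append_assoc], C, hC, ?_⟩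
    exact Λ.inter_rangeL_inter_rangeL_append C α _
  · rintro ⟨ρ, hρ, h, C, hC, rfl⟩
    rw [List.append_assoc] at h
    obtain rfl := List.append_cancel_left h
    exact ⟨_, ⟨ρ, hρ, rfl, C, hC, rfl⟩, (Λ.inter_rangeL_inter_rangeL_append C α _).symm⟩

theorem exists_glueLower_inter_iff (hN : Λ.IsNormal) {α β : List A} (hα : α ≠ [])
    {ξ : Set (Tr V A)} (hξ : Λ.IsFilterES ξ) (hR : Tr.mk [] (Λ.rangeL (α ++ β)) [] ∈ ξ)
    {n : ℕ} {ε : List A} {B : Set V} :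
    (∃ C, Λ.GlueLower β ξ n ε C ∧ B = C ∩ Λ.rangeL (α ++ ε)) ↔
      Λ.GlueLower (α ++ β) ξ n (α ++ ε) B := by
  have hL := hN.toIsWLR.toIsLS
  have hαε := hL.rangeL_mem_of_empty_mem (hN.empty_mem (hξ.mem_Aset hR).2.1.1)
    (List.append_ne_nil_of_left_ne_nil hα ε)
  constructor
  · rintro ⟨C, ⟨σ, rfl, hC, κ, C', hκ, hC', h⟩, rfl⟩
    refine ⟨σ, by rw [List.append_assoc], ⟨hL.inter_mem _ hC.1 _ hαε, Set.inter_subset_right⟩,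
      κ, C', hκ, hC', ?_⟩
    rw [hN.toIsWLR.relRange_inter hC.1 hαε, h, ← rangeL_append]
    simpa only [List.append_assoc] using Λ.inter_rangeL_inter_rangeL_append C' α _
  · rintro ⟨σ, h, hB, κ, C', hκ, hC', h'⟩
    rw [List.append_assoc] at h
    obtain rfl := List.append_cancel_left h
    have hC'' := hξ.mk_relRange_inter_mem hR hC'
    rw [← rangeL_append] at hC''
    refine ⟨B, ⟨σ, rfl, ⟨hB.1, hB.2.trans (Λ.rangeL_append_subset α ε)⟩, κ, _, hκ, hC'', ?_⟩,
      (Set.inter_eq_left.mpr hB.2).symm⟩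
    rw [h']
    simpa only [List.append_assoc] using (Λ.inter_rangeL_append_inter_rangeL C' α _).symm

theorem glueUpper_Gglue_iff (hN : Λ.IsNormal) {α β : List A} (hα : α ≠ []) (hβ : β ≠ [])
    {ξ : Set (Tr V A)} (hξ : Λ.IsFilterES ξ) (hR : Tr.mk [] (Λ.rangeL (α ++ β)) [] ∈ ξ)
    {δ : List A} {B : Set V} :
    Λ.GlueUpper α (Λ.Gglue β ξ) δ B ↔ ∃ ε, ε ≠ [] ∧ δ = α ++ ε ∧
      (Λ.GlueUpper (α ++ β) ξ δ B ∨ Λ.GlueLower (α ++ β) ξ (glueLookahead ξ) δ B) := by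
  refine exists_congr fun ε => and_congr_right fun _ => and_congr_right fun hδ => ?_
  subst hδ
  rw [← exists_glueUpper_inter_iff, ← exists_glueLower_inter_iff hN hα hξ hR, ← exists_or]
  simp only [Λ.mk_mem_Gglue hβ, or_and_right]

theorem glueLower_Gglue_iff (hN : Λ.IsNormal) {α β : List A} (hβ : β ≠ [])
    {ξ : Set (Tr V A)} (hξ : Λ.IsFilterES ξ) (hR : Tr.mk [] (Λ.rangeL (α ++ β)) [] ∈ ξ)
    {δ : List A} {B : Set V} :
    Λ.GlueLower α (Λ.Gglue β ξ) 1 δ B ↔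
      δ <+: α ∧ Λ.GlueLower (α ++ β) ξ (glueLookahead ξ) δ B := by
  have hL := hN.toIsWLR.toIsLS
  have hE := hN.empty_mem (hξ.mem_Aset hR).2.1.1
  obtain ⟨b, β, rfl⟩ := List.exists_cons_of_ne_nil hβ
  constructor
  · rintro ⟨τ, rfl, hB, _, C₂, hκ, hC₂, h⟩
    obtain ⟨b', rfl⟩ := List.length_eq_one_iff.mp hκ
    rcases (Λ.mk_mem_Gglue hβ ξ _ _).mp hC₂ with
      ⟨ε, hε, heq, -⟩ | ⟨σ, hσ, hC₂A, κ, C', hκ', hC', h'⟩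
    · exact absurd (List.append_eq_nil_iff.mp (List.cons_eq_cons.mp heq).2.symm).2 hε
    obtain ⟨rfl, rfl⟩ := List.cons_eq_cons.mp hσ
    refine ⟨List.prefix_append δ τ, τ ++ b :: β, by simp, hB, κ, C', hκ', hC', ?_⟩
    have hαb := hL.rangeL_mem_of_empty_mem hE
      (List.append_ne_nil_of_right_ne_nil (δ ++ τ) (List.cons_ne_nil b []))
    calc Λ.relRange B (τ ++ b :: β ++ κ)
        = Λ.relRange (Λ.relRange B (τ ++ [b])) (β ++ κ) := by simp [relRange_append]
      _ = Λ.relRange C₂ (β ++ κ) ∩ Λ.rangeL (δ ++ τ ++ [b] ++ (β ++ κ)) := by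
        rw [h, hN.toIsWLR.relRange_inter hC₂A.1 hαb, ← rangeL_append]
      _ = C' ∩ Λ.rangeL (δ ++ τ ++ b :: β ++ κ) := by
        rw [h']
        simpa only [List.append_assoc, List.singleton_append, List.cons_append,
          List.nil_append] using Λ.inter_rangeL_inter_rangeL_append C' (δ ++ τ) (b :: β ++ κ)
  · rintro ⟨⟨τ, rfl⟩, τ', h, hB, κ, C', hκ, hC', h'⟩
    rw [List.append_assoc] at h
    obtain rfl := List.append_cancel_left h
    have hC'' := hξ.mk_relRange_inter_mem hR hC'
    rw [← rangeL_append] at hC''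
    have hrB : Λ.relRange B (τ ++ [b]) ⊆ Λ.rangeL (δ ++ τ ++ [b]) := by
      simpa only [List.append_assoc] using Λ.relRange_subset_rangeL_append hB.2 (τ ++ [b])
    refine ⟨τ, rfl, hB, [b], _, rfl, (Λ.mk_mem_Gglue hβ ξ _ _).mpr (Or.inr ⟨β, rfl,
      ⟨hL.relRange_mem_of_empty_mem hE hB.1 _, hrB.trans (Λ.rangeL_append_subset _ _)⟩,
      κ, _, hκ, hC'', ?_⟩), (Set.inter_eq_left.mpr hrB).symm⟩
    rw [relRange_append, show τ ++ [b] ++ (β ++ κ) = τ ++ b :: β ++ κ by simp, h']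
    simpa only [List.append_assoc] using
      (Λ.inter_rangeL_append_inter_rangeL C' (δ ++ τ) (b :: β ++ κ)).symm

theorem GlueUpper.exists_append_eq {α β δ : List A} {ξ : Set (Tr V A)} {B : Set V}
    (hβ : β ≠ []) (h : Λ.GlueUpper (α ++ β) ξ δ B) : ∃ ε, ε ≠ [] ∧ δ = α ++ ε := by
  obtain ⟨ρ, -, rfl, -⟩ := h
  exact ⟨β ++ ρ, List.append_ne_nil_of_left_ne_nil hβ ρ, List.append_assoc α β ρ⟩

theorem GlueLower.exists_append_eq_or_prefix {α β δ : List A} {ξ : Set (Tr V A)} {n : ℕ}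
    {B : Set V} (h : Λ.GlueLower (α ++ β) ξ n δ B) :
    (∃ ε, ε ≠ [] ∧ δ = α ++ ε) ∨ δ <+: α := by
  obtain ⟨τ, h, -⟩ := h
  rcases List.prefix_or_prefix_of_prefix ⟨τ, h.symm⟩ (List.prefix_append α β) with
    hδα | ⟨ε, rfl⟩
  · exact Or.inr hδα
  rcases eq_or_ne ε [] with rfl | hε
  · exact Or.inr (by simp)
  · exact Or.inl ⟨ε, hε, rfl⟩

theorem Gglue_append (hN : Λ.IsNormal) (α β : List A) {ξ : Set (Tr V A)}
    (hξ : Λ.IsFilterES ξ) (hR : Tr.mk [] (Λ.rangeL (α ++ β)) [] ∈ ξ) :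
    Λ.Gglue (α ++ β) ξ = Λ.Gglue α (Λ.Gglue β ξ) := by
  rcases eq_or_ne α [] with rfl | hα
  · simp [Gglue]
  rcases eq_or_ne β [] with rfl | hβ
  · simp [Gglue]
  ext t
  rw [Λ.mem_Gglue (List.append_ne_nil_of_left_ne_nil hα β), Λ.mem_Gglue hα,
    glueLookahead_Gglue hN hβ hξ hR]
  refine exists_congr fun δ => exists_congr fun B => and_congr_right fun _ => ?_
  rw [glueUpper_Gglue_iff hN hα hβ hξ hR, glueLower_Gglue_iff hN hβ hξ hR]
  constructor
  · rintro (hU | hL)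
    · obtain ⟨ε, hε, hδ⟩ := hU.exists_append_eq hβ
      exact Or.inl ⟨ε, hε, hδ, Or.inl hU⟩
    · rcases hL.exists_append_eq_or_prefix with ⟨ε, hε, hδ⟩ | hδ
      · exact Or.inl ⟨ε, hε, hδ, Or.inr hL⟩
      · exact Or.inr ⟨hδ, hL⟩
  · rintro (⟨-, -, -, hUL⟩ | ⟨-, hL⟩)
    exacts [hUL, Or.inr hL]

theorem IsFilterES.Hcut_append {ξ : Set (Tr V A)} (hξ : Λ.IsFilterES ξ) (α β : List A) :
    Λ.Hcut β (Λ.Hcut α ξ) = Λ.Hcut (α ++ β) ξ := by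
  rcases eq_or_ne α [] with rfl | hα
  · simp [Hcut]
  rcases eq_or_ne β [] with rfl | hβ
  · simp [Hcut]
  ext t
  simp only [Hcut, if_neg hα, if_neg hβ, if_neg (List.append_ne_nil_of_left_ne_nil hα β),
    Set.mem_ofPred]
  constructor
  · rintro ⟨δ, B, rfl, hB, _, ⟨δ', D, heq, -, D', hD', hD'D⟩, hDB⟩
    obtain ⟨rfl, rfl, -⟩ := Tr.mk.inj heq
    exact ⟨δ, B, rfl, hB, D', by rwa [List.append_assoc], hD'D.trans hDB⟩
  · rintro ⟨δ, B, rfl, hB, D, hD, hDB⟩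
    rw [List.append_assoc] at hD
    obtain ⟨-, ⟨hD𝒜, hDr⟩, -⟩ := hξ.mem_Aset hD
    exact ⟨δ, B, rfl, hB, D, ⟨β ++ δ, D, rfl,
      ⟨hD𝒜, hDr.trans (Λ.rangeL_append_subset α _)⟩, D, hD, subset_rfl⟩, hDB⟩

end

theorem statement_19 (hΛ : Λ.IsNormal) (α β : List A) (γ : Word A) :
    (∀ ξ ∈ Λ.TGlueDom (α ++ β) γ, Λ.Gglue (α ++ β) ξ = Λ.Gglue α (Λ.Gglue β ξ)) ∧
    (∀ ξ ∈ Λ.TWord (wappend α (wappend β γ)),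
      Λ.Hcut β (Λ.Hcut α ξ) = Λ.Hcut (α ++ β) ξ) := by
  refine ⟨fun ξ ⟨hξ, _, hR⟩ => ?_, fun ξ hξ => hξ.1.1.Hcut_append α β⟩
  rcases eq_or_ne (α ++ β) [] with h | h
  · obtain ⟨rfl, rfl⟩ := List.append_eq_nil_iff.mp h
    simp [Gglue]
  · exact Gglue_append hΛ α β hξ.1 (hR h)

end LblSp
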